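/- Let r > e (so that e^{-1}r > 1) and s ≥ 1. Then min_{n∈ℕ} n^{sn}/r^n ≤ exp(1 − (e^{-1} r)^{1/s}). -/
import Mathlib


/-- for `r > e` and `s ≥ 1`,
`min_{n∈ℕ, n≥1} n^{sn}/rⁿ ≤ exp(1 − (e⁻¹ r)^{1/s})`. -/
theorem stmt_19 (r s : ℝ) (hr : Real.exp 1 < r) (hs : 1 ≤ s) :
    ⨅ n : ℕ+, ((n : ℝ) ^ (s * (n : ℝ)) / r ^ (n : ℕ)) ≤
      Real.exp (1 - ((Real.exp 1)⁻¹ * r) ^ (1 / s)) := by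
  set ξ := ((Real.exp 1)⁻¹ * r) ^ (1 / s) with hξdef
  have he : (0:ℝ) < Real.exp 1 := Real.exp_pos 1
  have hr0 : 0 < r := lt_trans he hr
  have h1 : (1:ℝ) < (Real.exp 1)⁻¹ * r := by
    rw [inv_mul_eq_div, lt_div_iff₀ he, one_mul]; exact hr
  have hs0 : (0:ℝ) < s := lt_of_lt_of_le one_pos hs
  have hξ1 : 1 < ξ := by
    rw [hξdef]
    exact (Real.one_lt_rpow_iff_of_pos (by linarith)).mpr (Or.inl ⟨h1, by positivity⟩)
  set n := ⌊ξ⌋₊ with hn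
  have hn1 : 0 < n := Nat.floor_pos.mpr hξ1.le
  have hnξ : (n:ℝ) ≤ ξ := Nat.floor_le (by linarith)
  have hξn : ξ - 1 < n := by
    have := Nat.lt_floor_add_one ξ; linarith
  have hbdd : BddBelow (Set.range fun n : ℕ+ => ((n : ℝ) ^ (s * (n : ℝ)) / r ^ (n : ℕ))) := by
    refine ⟨0, fun x hx => ?_⟩
    obtain ⟨m, rfl⟩ := hx
    positivity
  refine le_trans (ciInf_le hbdd ⟨n, hn1⟩) ?_
  simp only [PNat.mk_coe]
  have hnpos : (0:ℝ) < n := by exact_mod_cast hn1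
  have hlog : Real.log n ≤ Real.log ξ := Real.log_le_log hnpos hnξ
  have hlogξ : s * Real.log ξ = Real.log r - 1 := by
    rw [hξdef, Real.log_rpow (by linarith), Real.log_mul (by positivity) (ne_of_gt hr0),
        Real.log_inv, Real.log_exp]
    field_simp
    ring
  have key : s * (n:ℝ) * Real.log n - (n:ℝ) * Real.log r ≤ 1 - ξ := by
    have h2 : s * Real.log n - Real.log r ≤ -1 := by
      nlinarith [mul_le_mul_of_nonneg_left hlog hs0.le]
    have hn1' : (1:ℝ) ≤ n := by exact_mod_cast hn1
    nlinarith
  calc ((n:ℝ)) ^ (s * (n:ℝ)) / r ^ (n:ℕ)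
      = Real.exp (s * n * Real.log n) / Real.exp (n * Real.log r) := by
        rw [Real.rpow_def_of_pos hnpos,
          show r ^ (n:ℕ) = Real.exp ((n:ℝ) * Real.log r) by
            rw [Real.exp_nat_mul, Real.exp_log hr0]]
        ring_nf
    _ = Real.exp (s * n * Real.log n - n * Real.log r) := (Real.exp_sub _ _).symm
    _ ≤ Real.exp (1 - ξ) := Real.exp_le_exp.mpr key
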